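/- arXiv:2411.04651 — 3 statements merged into one kernel-verified Lean document; each statement's English description precedes it below -/
import Mathlib

section
/- The function h(t) = (t + sinh(t)·cosh(t)) / sinh²(t) is monotonically decreasing on (0, ∞). -/
open Real

/-- Since `1 + cosh² t + sinh² t = 2 cosh² t`, the quotient rule leaves only `-2 t sinh t cosh t`
in the numerator. -/
theorem hasDerivAt_add_sinh_mul_cosh_div_sinh_sq {t : ℝ} (ht : t ≠ 0) :
    HasDerivAt (fun t : ℝ => (t + sinh t * cosh t) / sinh t ^ 2)
      (-2 * t * cosh t / sinh t ^ 3) t := by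
  have hs : sinh t ≠ 0 := sinh_ne_zero.2 ht
  have hnum : HasDerivAt (fun t : ℝ => t + sinh t * cosh t)
      (1 + (cosh t * cosh t + sinh t * sinh t)) t :=
    (hasDerivAt_id t).add ((hasDerivAt_sinh t).mul (hasDerivAt_cosh t))
  refine (hnum.div ((hasDerivAt_sinh t).fun_pow 2) (pow_ne_zero 2 hs)).congr_deriv ?_
  field_simp
  linear_combination -sinh t ^ 2 * cosh_sq t

theorem stmt_4 :
    AntitoneOn (fun t : ℝ => (t + Real.sinh t * Real.cosh t) / (Real.sinh t) ^ 2)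
      (Set.Ioi 0) := by
  have hderiv : ∀ t ∈ Set.Ioi (0 : ℝ), HasDerivAt
      (fun t : ℝ => (t + sinh t * cosh t) / sinh t ^ 2) (-2 * t * cosh t / sinh t ^ 3) t :=
    fun t ht => hasDerivAt_add_sinh_mul_cosh_div_sinh_sq (ne_of_gt ht)
  refine (strictAntiOn_of_hasDerivWithinAt_neg (convex_Ioi 0)
    (f' := fun t => -2 * t * cosh t / sinh t ^ 3)
    (fun t ht => (hderiv t ht).continuousAt.continuousWithinAt) ?_ ?_).antitoneOn
  · rw [interior_Ioi]
    exact fun t ht => (hderiv t ht).hasDerivWithinAt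
  · rw [interior_Ioi]
    intro t (ht : 0 < t)
    have hsinh : 0 < sinh t := sinh_pos_iff.2 ht
    exact div_neg_of_neg_of_pos (by nlinarith [mul_pos ht (cosh_pos t)]) (by positivity)
end

section
/- Let β₁ < β < β₂, let v : Ω → ℂ with Ω ⊂ ℝ² a wedge parametrized in polar coordinates by r ∈ (0,∞), φ ∈ (0,θ), and let c ∈ L²((0,θ)). Then ‖c‖_{L²(0,θ)} ≲_β A^{(β₂−β)/(β₂−β₁)} · B^{(β−β₁)/(β₂−β₁)}, where A² = ∫₀^θ ∫₀^∞ |r^{-β₁} v|² dr/r dφ and B² = ∫₀^θ ∫₀^∞ |r^{-β₂}(v − c(φ) r^β)|² dr/r dφ, provided A, B are finite. -/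
/-!
Fix `φ` and write `a = c(φ)`, `w = v(·, φ)`. The triangle inequality gives
`|a| r^β ≤ |w(r)| + |w(r) - a r^β|`, and on the dyadic annulus `R/2 < r < R` the weights
`r^{β₁-β}` and `r^{β₂-β}` are comparable to `R^{β₁-β}` and `R^{β₂-β}`. Since that annulus has
`dr/r`-measure at least `1/2`, averaging over it and integrating in `φ` gives, for every `R > 0`,
`‖c‖² ≲ R^{-2(β-β₁)} A² + R^{2(β₂-β)} B²`. Choosing `R^{β₂-β₁} = A/B` yields the claim.
-/

open MeasureTheory Set

/-- The measure `dr/r` on `(0,∞)`. -/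
noncomputable def haarHalfLine : Measure ℝ :=
  (volume.restrict (Set.Ioi (0 : ℝ))).withDensity (fun r => ENNReal.ofReal r⁻¹)

/-- The weighted wedge norm `(∫₀^θ ∫₀^∞ |r^{-η} w(r,φ)|² dr/r dφ)^{1/2}`. -/
noncomputable def wedgeNorm (θ : ℝ) (w : ℝ → ℝ → ℂ) (η : ℝ) : ENNReal :=
  (∫⁻ φ in Set.Ioo (0 : ℝ) θ,
    ∫⁻ r, ENNReal.ofReal ((r ^ (-η) * ‖w r φ‖) ^ 2) ∂haarHalfLine) ^ (1/2 : ℝ)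

open Filter Topology Real

instance : SFinite haarHalfLine := by
  unfold haarHalfLine; infer_instance

theorem inv_two_le_haarHalfLine_Ioo {R : ℝ} (hR : 0 < R) :
    2⁻¹ ≤ haarHalfLine (Ioo (R / 2) R) := by
  rw [haarHalfLine, withDensity_apply _ measurableSet_Ioo,
    Measure.restrict_restrict measurableSet_Ioo,
    inter_eq_self_of_subset_left (Ioo_subset_Ioi_self.trans (Ioi_subset_Ioi (half_pos hR).le))]
  calc 2⁻¹ = ENNReal.ofReal R⁻¹ * volume (Ioo (R / 2) R) := by
        rw [Real.volume_Ioo, ← ENNReal.ofReal_mul (by positivity),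
          show R⁻¹ * (R - R / 2) = 2⁻¹ by field_simp; ring, ENNReal.ofReal_inv_of_pos two_pos,
          ENNReal.ofReal_ofNat]
    _ = ∫⁻ _ in Ioo (R / 2) R, ENNReal.ofReal R⁻¹ := (setLIntegral_const _ _).symm
    _ ≤ ∫⁻ r in Ioo (R / 2) R, ENNReal.ofReal r⁻¹ :=
        setLIntegral_mono' measurableSet_Ioo fun r hr =>
          ENNReal.ofReal_le_ofReal (inv_anti₀ ((half_pos hR).trans hr.1) hr.2.le)

noncomputable def radialNormSq (η : ℝ) (w : ℝ → ℂ) : ENNReal :=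
  ∫⁻ r, ENNReal.ofReal ((r ^ (-η) * ‖w r‖) ^ 2) ∂haarHalfLine

theorem measurable_radialNormSq {u : ℝ → ℝ → ℂ} (hu : Measurable (Function.uncurry u)) (η : ℝ) :
    Measurable fun φ => radialNormSq η fun r => u r φ := by
  have : Measurable fun p : ℝ × ℝ => u p.2 p.1 := hu.comp measurable_swap
  exact Measurable.lintegral_prod_right'
    (f := fun p : ℝ × ℝ => ENNReal.ofReal ((p.2 ^ (-η) * ‖u p.2 p.1‖) ^ 2)) (by fun_prop)

theorem le_two_mul_rpow_mul_rpow_of_pos {a b A B X : ℝ} (ha : 0 < a) (hb : 0 < b)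
    (hA : 0 < A) (hB : 0 < B) (h : ∀ R : ℝ, 0 < R → X ≤ R ^ (-a) * A + R ^ b * B) :
    X ≤ 2 * A ^ (b / (a + b)) * B ^ (a / (a + b)) := by
  -- the radius that balances the two terms: `R ^ (a + b) = A / B`
  set R := exp ((log A - log B) / (a + b))
  have balanced : ∀ (e C : ℝ), 0 < C →
      log C + e * ((log A - log B) / (a + b)) = log A * (b / (a + b)) + log B * (a / (a + b)) →
      R ^ e * C = A ^ (b / (a + b)) * B ^ (a / (a + b)) := by
    intro e C hC he
    rw [rpow_def_of_pos (exp_pos _), log_exp, rpow_def_of_pos hA, rpow_def_of_pos hB,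
      ← exp_add, ← he, exp_add, exp_log hC, mul_comm, mul_comm e]
  calc X ≤ R ^ (-a) * A + R ^ b * B := h R (exp_pos _)
    _ = _ := by
      rw [balanced (-a) A hA (by field_simp; ring), balanced b B hB (by field_simp; ring)]
      ring

theorem le_two_mul_rpow_mul_rpow_of_forall_le {a b A B X : ℝ} (ha : 0 < a) (hb : 0 < b)
    (hA : 0 ≤ A) (hB : 0 ≤ B) (h : ∀ R : ℝ, 0 < R → X ≤ R ^ (-a) * A + R ^ b * B) :
    X ≤ 2 * A ^ (b / (a + b)) * B ^ (a / (a + b)) := by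
  have hp : 0 ≤ b / (a + b) := by positivity
  have hq : 0 ≤ a / (a + b) := by positivity
  have hcont : ContinuousAt
      (fun ε : ℝ => 2 * (A + ε) ^ (b / (a + b)) * (B + ε) ^ (a / (a + b))) 0 := by
    fun_prop (disch := simp [hp, hq])
  have hlim : Tendsto (fun ε : ℝ => 2 * (A + ε) ^ (b / (a + b)) * (B + ε) ^ (a / (a + b)))
      (𝓝[>] 0) (𝓝 (2 * A ^ (b / (a + b)) * B ^ (a / (a + b)))) := by
    simpa using hcont.tendsto.mono_left nhdsWithin_le_nhds
  -- `A` or `B` may vanish: apply the positive case to `A + ε`, `B + ε` and let `ε → 0⁺`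
  refine ge_of_tendsto hlim (eventually_nhdsWithin_of_forall fun ε (hε : 0 < ε) => ?_)
  refine le_two_mul_rpow_mul_rpow_of_pos ha hb (by linarith) (by linarith) fun R hR => ?_
  nlinarith [h R hR, rpow_nonneg hR.le (-a), rpow_nonneg hR.le b]

theorem ENNReal.le_two_mul_rpow_mul_rpow_of_forall_le {a b : ℝ} (ha : 0 < a) (hb : 0 < b)
    {A B X : ENNReal} (hA : A ≠ ⊤) (hB : B ≠ ⊤)
    (h : ∀ R : ℝ, 0 < R → X ≤ ENNReal.ofReal (R ^ (-a)) * A + ENNReal.ofReal (R ^ b) * B) :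
    X ≤ 2 * A ^ (b / (a + b)) * B ^ (a / (a + b)) := by
  have hX : X ≠ ⊤ := ne_top_of_le_ne_top (by finiteness) (h 1 one_pos)
  have hreal := _root_.le_two_mul_rpow_mul_rpow_of_forall_le ha hb ENNReal.toReal_nonneg
    ENNReal.toReal_nonneg fun R hR => by
      have := ENNReal.toReal_mono (by finiteness) (h R hR)
      rwa [ENNReal.toReal_add (by finiteness) (by finiteness), ENNReal.toReal_mul,
        ENNReal.toReal_mul, ENNReal.toReal_ofReal (rpow_nonneg hR.le _),
        ENNReal.toReal_ofReal (rpow_nonneg hR.le _)] at this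
  calc X = ENNReal.ofReal X.toReal := (ENNReal.ofReal_toReal hX).symm
    _ ≤ _ := ENNReal.ofReal_le_ofReal hreal
    _ = _ := by
      rw [ENNReal.ofReal_mul (by positivity), ENNReal.ofReal_mul (by positivity),
        ← ENNReal.ofReal_rpow_of_nonneg ENNReal.toReal_nonneg (by positivity),
        ← ENNReal.ofReal_rpow_of_nonneg ENNReal.toReal_nonneg (by positivity),
        ENNReal.ofReal_toReal hA, ENNReal.ofReal_toReal hB, ENNReal.ofReal_ofNat]

theorem norm_sq_le_of_mem_Ioo {β₁ β β₂ R r : ℝ} (h₁ : β₁ ≤ β) (h₂ : β ≤ β₂)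
    (hr : r ∈ Ioo (R / 2) R) (a z : ℂ) :
    ‖a‖ ^ 2 ≤ 2 * 4 ^ (β - β₁) * (R ^ (-(2 * (β - β₁))) * (r ^ (-β₁) * ‖z‖) ^ 2
      + R ^ (2 * (β₂ - β)) * (r ^ (-β₂) * ‖z - a * (r : ℂ) ^ (β : ℂ)‖) ^ 2) := by
  obtain ⟨hr₁, hr₂⟩ := hr
  have hR : 0 < R := by linarith
  have hr : 0 < r := by linarith
  set x := r ^ (-β₁) * ‖z‖
  set y := r ^ (-β₂) * ‖z - a * (r : ℂ) ^ (β : ℂ)‖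
  have htri : ‖a‖ ≤ r ^ (β₁ - β) * x + r ^ (β₂ - β) * y := by
    have := norm_le_norm_add_norm_sub z (a * (r : ℂ) ^ (β : ℂ))
    rw [norm_mul, Complex.norm_cpow_eq_rpow_re_of_pos hr, Complex.ofReal_re] at this
    calc ‖a‖ = r ^ (-β) * (‖a‖ * r ^ β) := by
          rw [mul_left_comm, ← rpow_add hr, neg_add_cancel, rpow_zero, mul_one]
      _ ≤ r ^ (-β) * (‖z‖ + ‖z - a * (r : ℂ) ^ (β : ℂ)‖) := by gcongr
      _ = _ := by
        simp only [x, y, ← mul_assoc, ← rpow_add hr, mul_add]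
        ring_nf
  have hk : 1 ≤ (2 : ℝ) ^ (β - β₁) := one_le_rpow one_le_two (by linarith)
  have hx : r ^ (β₁ - β) ≤ 2 ^ (β - β₁) * R ^ (-(β - β₁)) :=
    calc r ^ (β₁ - β) ≤ (R / 2) ^ (β₁ - β) :=
          rpow_le_rpow_of_nonpos (by positivity) hr₁.le (by linarith)
      _ = _ := by
        rw [neg_sub, div_rpow hR.le zero_le_two, div_eq_mul_inv, ← rpow_neg zero_le_two, neg_sub,
          mul_comm]
  have hy : r ^ (β₂ - β) ≤ 2 ^ (β - β₁) * R ^ (β₂ - β) :=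
    calc r ^ (β₂ - β) ≤ R ^ (β₂ - β) := rpow_le_rpow hr.le hr₂.le (by linarith)
      _ ≤ _ := le_mul_of_one_le_left (by positivity) hk
  have hmain : ‖a‖ ≤ 2 ^ (β - β₁) * (R ^ (-(β - β₁)) * x + R ^ (β₂ - β) * y) :=
    calc ‖a‖ ≤ r ^ (β₁ - β) * x + r ^ (β₂ - β) * y := htri
      _ ≤ 2 ^ (β - β₁) * R ^ (-(β - β₁)) * x + 2 ^ (β - β₁) * R ^ (β₂ - β) * y := by gcongr
      _ = _ := by ring
  have hsq : ∀ (t : ℝ) {s : ℝ}, 0 < s → s ^ (2 * t) = (s ^ t) ^ 2 := fun t s hs => by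
    rw [mul_comm, rpow_mul hs.le, rpow_two]
  have h4 : (4 : ℝ) ^ (β - β₁) = (2 ^ (β - β₁)) ^ 2 := by
    rw [← hsq _ two_pos, rpow_mul zero_le_two]; norm_num
  rw [h4, ← mul_neg, hsq _ hR, hsq _ hR]
  calc ‖a‖ ^ 2 ≤ (2 ^ (β - β₁) * (R ^ (-(β - β₁)) * x + R ^ (β₂ - β) * y)) ^ 2 :=
        pow_le_pow_left₀ (norm_nonneg a) hmain 2
    _ ≤ _ := by nlinarith [sq_nonneg (R ^ (-(β - β₁)) * x - R ^ (β₂ - β) * y)]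

theorem ofReal_norm_sq_le_radialNormSq {β₁ β β₂ R : ℝ} (h₁ : β₁ ≤ β) (h₂ : β ≤ β₂) (hR : 0 < R)
    {w : ℝ → ℂ} (hw : Measurable w) (a : ℂ) :
    ENNReal.ofReal (‖a‖ ^ 2) ≤
      ENNReal.ofReal (R ^ (-(2 * (β - β₁)))) *
          (4 * ENNReal.ofReal (4 ^ (β - β₁)) * radialNormSq β₁ w)
        + ENNReal.ofReal (R ^ (2 * (β₂ - β))) *
          (4 * ENNReal.ofReal (4 ^ (β - β₁)) *
            radialNormSq β₂ fun r => w r - a * (r : ℂ) ^ (β : ℂ)) := by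
  set C := ENNReal.ofReal (2 * 4 ^ (β - β₁))
  set f : ℝ → ENNReal := fun r => ENNReal.ofReal (R ^ (-(2 * (β - β₁)))) *
    ENNReal.ofReal ((r ^ (-β₁) * ‖w r‖) ^ 2)
  set g : ℝ → ENNReal := fun r => ENNReal.ofReal (R ^ (2 * (β₂ - β))) *
    ENNReal.ofReal ((r ^ (-β₂) * ‖w r - a * (r : ℂ) ^ (β : ℂ)‖) ^ 2)
  have hf : Measurable f := by fun_prop
  have hpt : ∀ r ∈ Ioo (R / 2) R, ENNReal.ofReal (‖a‖ ^ 2) ≤ C * (f r + g r) := fun r hr => by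
    simp only [C, f, g]
    rw [← ENNReal.ofReal_mul (by positivity), ← ENNReal.ofReal_mul (by positivity),
      ← ENNReal.ofReal_add (by positivity) (by positivity), ← ENNReal.ofReal_mul (by positivity)]
    exact ENNReal.ofReal_le_ofReal (norm_sq_le_of_mem_Ioo h₁ h₂ hr a (w r))
  calc ENNReal.ofReal (‖a‖ ^ 2)
      = 2 * (ENNReal.ofReal (‖a‖ ^ 2) * 2⁻¹) := by
        rw [mul_comm, mul_assoc, ENNReal.inv_mul_cancel two_ne_zero ENNReal.ofNat_ne_top, mul_one]
    _ ≤ 2 * (ENNReal.ofReal (‖a‖ ^ 2) * haarHalfLine (Ioo (R / 2) R)) := by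
        gcongr; exact inv_two_le_haarHalfLine_Ioo hR
    _ = 2 * ∫⁻ _ in Ioo (R / 2) R, ENNReal.ofReal (‖a‖ ^ 2) ∂haarHalfLine := by
        rw [setLIntegral_const]
    _ ≤ 2 * ∫⁻ r in Ioo (R / 2) R, C * (f r + g r) ∂haarHalfLine :=
        mul_le_mul_right (setLIntegral_mono' measurableSet_Ioo hpt) 2
    _ ≤ 2 * ∫⁻ r, C * (f r + g r) ∂haarHalfLine :=
        mul_le_mul_right (setLIntegral_le_lintegral _ _) 2
    _ = _ := by
        rw [lintegral_const_mul' _ _ ENNReal.ofReal_ne_top, lintegral_add_left hf,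
          lintegral_const_mul' _ _ ENNReal.ofReal_ne_top,
          lintegral_const_mul' _ _ ENNReal.ofReal_ne_top,
          ENNReal.ofReal_mul zero_le_two, ENNReal.ofReal_ofNat, radialNormSq, radialNormSq]
        ring

theorem lintegral_ofReal_norm_sq_le_radialNormSq {β₁ β β₂ R θ : ℝ} (h₁ : β₁ ≤ β) (h₂ : β ≤ β₂)
    (hR : 0 < R) {v : ℝ → ℝ → ℂ} (hv : Measurable (Function.uncurry v)) (c : ℝ → ℂ) :
    ∫⁻ φ in Ioo 0 θ, ENNReal.ofReal (‖c φ‖ ^ 2) ≤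
      ENNReal.ofReal (R ^ (-(2 * (β - β₁)))) * (4 * ENNReal.ofReal (4 ^ (β - β₁)) *
          ∫⁻ φ in Ioo 0 θ, radialNormSq β₁ fun r => v r φ)
        + ENNReal.ofReal (R ^ (2 * (β₂ - β))) * (4 * ENNReal.ofReal (4 ^ (β - β₁)) *
          ∫⁻ φ in Ioo 0 θ, radialNormSq β₂ fun r => v r φ - c φ * (r : ℂ) ^ (β : ℂ)) := by
  have hK : 4 * ENNReal.ofReal (4 ^ (β - β₁)) ≠ ⊤ := by finiteness
  calc _ ≤ ∫⁻ φ in Ioo 0 θ, (ENNReal.ofReal (R ^ (-(2 * (β - β₁)))) *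
            (4 * ENNReal.ofReal (4 ^ (β - β₁)) * radialNormSq β₁ fun r => v r φ)
          + ENNReal.ofReal (R ^ (2 * (β₂ - β))) * (4 * ENNReal.ofReal (4 ^ (β - β₁)) *
            radialNormSq β₂ fun r => v r φ - c φ * (r : ℂ) ^ (β : ℂ))) :=
        lintegral_mono fun φ => ofReal_norm_sq_le_radialNormSq h₁ h₂ hR
          (hv.comp measurable_prodMk_right) (c φ)
    _ = _ := by
        rw [lintegral_add_left (((measurable_radialNormSq hv β₁).const_mul _).const_mul _),
          lintegral_const_mul' _ _ ENNReal.ofReal_ne_top, lintegral_const_mul' _ _ hK,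
          lintegral_const_mul' _ _ ENNReal.ofReal_ne_top, lintegral_const_mul' _ _ hK]

theorem stmt_8 (β₁ β β₂ : ℝ) (h1 : β₁ < β) (h2 : β < β₂) :
    ∃ C : ENNReal, C ≠ ⊤ ∧ ∀ (θ : ℝ), 0 < θ → θ < 2 * Real.pi →
      ∀ (v : ℝ → ℝ → ℂ) (c : ℝ → ℂ), Measurable (Function.uncurry v) → Measurable c →
        wedgeNorm θ v β₁ ≠ ⊤ →
        wedgeNorm θ (fun r φ => v r φ - c φ * (r : ℂ) ^ (β : ℂ)) β₂ ≠ ⊤ →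
        (∫⁻ φ in Set.Ioo (0 : ℝ) θ, ENNReal.ofReal (‖c φ‖ ^ 2)) ^ (1/2 : ℝ)
          ≤ C * wedgeNorm θ v β₁ ^ ((β₂ - β) / (β₂ - β₁)) *
              wedgeNorm θ (fun r φ => v r φ - c φ * (r : ℂ) ^ (β : ℂ)) β₂
                ^ ((β - β₁) / (β₂ - β₁)) := by
  set p := (β₂ - β) / (β₂ - β₁)
  set q := (β - β₁) / (β₂ - β₁)
  have hp : 0 ≤ p := div_nonneg (by linarith) (by linarith)
  have hq : 0 ≤ q := div_nonneg (by linarith) (by linarith)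
  set K := 4 * ENNReal.ofReal (4 ^ (β - β₁))
  refine ⟨(2 * K ^ p * K ^ q) ^ (1 / 2 : ℝ), by finiteness, ?_⟩
  intro θ _ _ v c hv _ hA hB
  set F := ∫⁻ φ in Ioo 0 θ, radialNormSq β₁ fun r => v r φ
  set G := ∫⁻ φ in Ioo 0 θ, radialNormSq β₂ fun r => v r φ - c φ * (r : ℂ) ^ (β : ℂ)
  have hA_eq : wedgeNorm θ v β₁ = F ^ (1 / 2 : ℝ) := rfl
  have hB_eq : wedgeNorm θ (fun r φ => v r φ - c φ * (r : ℂ) ^ (β : ℂ)) β₂ = G ^ (1 / 2 : ℝ) := rfl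
  have hF : F ≠ ⊤ := (ENNReal.rpow_eq_top_iff_of_pos one_half_pos).not.mp (hA_eq ▸ hA)
  have hG : G ≠ ⊤ := (ENNReal.rpow_eq_top_iff_of_pos one_half_pos).not.mp (hB_eq ▸ hB)
  have hopt := ENNReal.le_two_mul_rpow_mul_rpow_of_forall_le (by linarith) (by linarith)
    (by finiteness) (by finiteness) fun R hR =>
      lintegral_ofReal_norm_sq_le_radialNormSq h1.le h2.le hR hv c
  rw [show 2 * (β₂ - β) / (2 * (β - β₁) + 2 * (β₂ - β)) = p by
      rw [div_eq_div_iff (by linarith) (by linarith)]; ring,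
    show 2 * (β - β₁) / (2 * (β - β₁) + 2 * (β₂ - β)) = q by
      rw [div_eq_div_iff (by linarith) (by linarith)]; ring] at hopt
  calc _ ≤ (2 * (K * F) ^ p * (K * G) ^ q) ^ (1 / 2 : ℝ) :=
        ENNReal.rpow_le_rpow hopt one_half_pos.le
    _ = _ := by
      simp only [hA_eq, hB_eq, ENNReal.mul_rpow_of_nonneg _ _ hp, ENNReal.mul_rpow_of_nonneg _ _ hq,
        ENNReal.mul_rpow_of_nonneg _ _ one_half_pos.le, ← ENNReal.rpow_mul]
      ring_nf
end

section
/- Let α₀ > 0, α₁ ∈ (0, π/2], θ > 0, and let f, g ∈ {sin, cos} (complex). Let λ ∈ ℂ satisfy θ|Re λ| ≤ α₀ and dist(θ|Re λ|, g^{-1}({0}) ∩ ℝ) ≥ α₁. Then 0 < sin(α₁) ≤ |g(λθ)| ≤ cosh(θ Im λ). -/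
/-!
Write `λθ = x + iy`. Then `|sin(x + iy)|² = sin² x + sinh² y` and `|cos(x + iy)|² = cos² x + sinh² y`,
so `|g(λθ)|` lies between `|g(x)|` and `cosh y`. Reducing `x` modulo `π` into `[-π/2, π/2]`, the
reduced point has modulus at least `α₁` (its distance to a zero of `g`, after a shift by `π/2` for
`cos`), and monotonicity of `sin` on `[-π/2, π/2]` gives `|g(x)| ≥ sin α₁`.
-/

open Real

namespace Real

theorem sin_abs_le_abs_sin (x : ℝ) : sin |x| ≤ |sin x| := by
  rcases abs_choice x with h | h <;> rw [h]
  · exact le_abs_self _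
  · rw [sin_neg]
    exact neg_le_abs _

theorem abs_sin_eq_abs_sin_of_abs_eq {x y : ℝ} (h : |x| = |y|) : |sin x| = |sin y| := by
  rcases abs_eq_abs.mp h with rfl | rfl
  · rfl
  · rw [sin_neg, abs_neg]

theorem cos_eq_cos_of_abs_eq {x y : ℝ} (h : |x| = |y|) : cos x = cos y := by
  rw [← cos_abs, h, cos_abs]

theorem sin_le_abs_sin_of_le_dist_zeros {α t : ℝ} (hα : -(π / 2) ≤ α)
    (h : ∀ x, sin x = 0 → α ≤ |t - x|) : sin α ≤ |sin t| := by
  set n : ℤ := round (t / π)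
  set u := t - n * π
  have hu : |u| ≤ π / 2 := by
    have hround := abs_sub_round (t / π)
    calc |u| = |t / π - n| * π := by
          rw [← abs_of_pos pi_pos, ← abs_mul, abs_of_pos pi_pos, sub_mul,
            div_mul_cancel₀ _ pi_ne_zero]
      _ ≤ 1 / 2 * π := mul_le_mul_of_nonneg_right hround pi_pos.le
      _ = π / 2 := by ring
  have hαu : α ≤ |u| := h _ (sin_int_mul_pi n)
  calc sin α ≤ sin |u| :=
        strictMonoOn_sin.monotoneOn ⟨hα, hαu.trans hu⟩
          ⟨by linarith [abs_nonneg u, pi_pos], hu⟩ hαu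
    _ ≤ |sin u| := sin_abs_le_abs_sin u
    _ = |sin t| := by rw [sin_sub_int_mul_pi, abs_mul, abs_neg_one_zpow, one_mul]

theorem sin_le_abs_cos_of_le_dist_zeros {α t : ℝ} (hα : -(π / 2) ≤ α)
    (h : ∀ x, cos x = 0 → α ≤ |t - x|) : sin α ≤ |cos t| := by
  rw [← sin_add_pi_div_two]
  refine sin_le_abs_sin_of_le_dist_zeros hα fun x hx => ?_
  have := h (x - π / 2) (by rw [cos_sub_pi_div_two, hx])
  rwa [sub_sub_eq_add_sub] at this

end Real

namespace Complex

theorem norm_sin_sq (z : ℂ) : ‖sin z‖ ^ 2 = Real.sin z.re ^ 2 + Real.sinh z.im ^ 2 := by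
  rw [← re_add_im z, sin_add_mul_I, ← ofReal_sin, ← ofReal_cos, ← ofReal_cosh, ← ofReal_sinh,
    ← ofReal_mul, ← ofReal_mul, norm_add_mul_I, Real.sq_sqrt (by positivity), re_add_im]
  nlinarith [Real.sin_sq_add_cos_sq z.re, Real.cosh_sq z.im]

theorem norm_cos_sq (z : ℂ) : ‖cos z‖ ^ 2 = Real.cos z.re ^ 2 + Real.sinh z.im ^ 2 := by
  rw [← re_add_im z, cos_add_mul_I, ← ofReal_sin, ← ofReal_cos, ← ofReal_cosh, ← ofReal_sinh,
    ← ofReal_mul, ← ofReal_mul, sub_eq_add_neg, ← neg_mul, ← ofReal_neg, norm_add_mul_I,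
    Real.sq_sqrt (by positivity), re_add_im]
  nlinarith [Real.sin_sq_add_cos_sq z.re, Real.cosh_sq z.im]

theorem abs_le_norm_and_norm_le_cosh {w : ℂ} {a y : ℝ} (ha : a ^ 2 ≤ 1)
    (h : ‖w‖ ^ 2 = a ^ 2 + Real.sinh y ^ 2) : |a| ≤ ‖w‖ ∧ ‖w‖ ≤ Real.cosh y := by
  constructor
  · exact (pow_le_pow_iff_left₀ (abs_nonneg a) (norm_nonneg w) two_ne_zero).1
      (by rw [sq_abs, h]; nlinarith [sq_nonneg (Real.sinh y)])
  · exact (pow_le_pow_iff_left₀ (norm_nonneg w) (Real.cosh_pos y).le two_ne_zero).1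
      (by rw [h, Real.cosh_sq]; linarith)

end Complex

theorem stmt_10_general (α₁ θ : ℝ) (hα₁ : α₁ ∈ Set.Ioc 0 (Real.pi / 2))
    (g : ℂ → ℂ) (hg : g = Complex.sin ∨ g = Complex.cos)
    (lam : ℂ)
    (hdist : ∀ x : ℝ, g x = 0 → α₁ ≤ |θ * |lam.re| - x|) :
    0 < Real.sin α₁ ∧ Real.sin α₁ ≤ ‖g (lam * θ)‖ ∧
      ‖g (lam * θ)‖ ≤ Real.cosh (θ * lam.im) := by
  obtain ⟨hα₁_pos, hα₁_le⟩ := hα₁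
  have hα₁' : -(π / 2) ≤ α₁ := by linarith [pi_pos]
  have hre : |(θ * |lam.re|)| = |(lam * θ).re| := by simp [abs_mul, mul_comm]
  have him : θ * lam.im = (lam * θ).im := by simp [mul_comm]
  refine ⟨sin_pos_of_pos_of_lt_pi hα₁_pos (by linarith [pi_pos]), ?_⟩
  rw [him]
  rcases hg with rfl | rfl
  · have hlow := sin_le_abs_sin_of_le_dist_zeros hα₁' fun x hx => hdist x (by exact_mod_cast hx)
    rw [abs_sin_eq_abs_sin_of_abs_eq hre] at hlow
    have hbounds := Complex.abs_le_norm_and_norm_le_cosh (sin_sq_le_one _) (Complex.norm_sin_sq (lam * θ))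
    exact ⟨hlow.trans hbounds.1, hbounds.2⟩
  · have hlow := sin_le_abs_cos_of_le_dist_zeros hα₁' fun x hx => hdist x (by exact_mod_cast hx)
    rw [cos_eq_cos_of_abs_eq hre] at hlow
    have hbounds := Complex.abs_le_norm_and_norm_le_cosh (cos_sq_le_one _) (Complex.norm_cos_sq (lam * θ))
    exact ⟨hlow.trans hbounds.1, hbounds.2⟩

theorem stmt_10 (α₀ α₁ θ : ℝ) (hα₀ : 0 < α₀) (hα₁ : α₁ ∈ Set.Ioc 0 (Real.pi / 2))
    (hθ : 0 < θ) (g : ℂ → ℂ) (hg : g = Complex.sin ∨ g = Complex.cos)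
    (lam : ℂ) (hre : θ * |lam.re| ≤ α₀)
    (hdist : ∀ x : ℝ, g x = 0 → α₁ ≤ |θ * |lam.re| - x|) :
    0 < Real.sin α₁ ∧ Real.sin α₁ ≤ ‖g (lam * θ)‖ ∧
      ‖g (lam * θ)‖ ≤ Real.cosh (θ * lam.im) :=
  stmt_10_general α₁ θ hα₁ g hg lam hdist
end
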